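/- Let φ be a 3-SAT formula with variables x_1, …, x_N and clauses c_1, …, c_M, each clause consisting of exactly three pairwise distinct and pairwise non-complementary literals, and let (ℓ, G, H, ⟨≺_H, σ_H⟩) with ℓ = 2N + 1 be the Stack Layout Extension instance constructed from φ as described in the context. Then φ is satisfiable if and only if G admits an ℓ-page stack layout extending ⟨≺_H, σ_H⟩. -/

import Mathlib

/-- Two edges `e` and `f` alternate (cross) with respect to the vertex position
function `pos`: `e = {a, c}` and `f = {b, d}` with `pos a < pos b < pos c < pos d`. -/
def EdgesCross {V : Type*} (pos : V → ℕ) (e f : Sym2 V) : Prop :=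
  ∃ a b c d : V, e = s(a, c) ∧ f = s(b, d) ∧ pos a < pos b ∧ pos b < pos c ∧ pos c < pos d

/-- The vertices used in the NP-hardness construction: the fixation-gadget vertices
`b t, gv t, a t` (for `t < 3`, where `gv` plays the role of the gadget vertices `v_t`),
the dummy vertices `d q` (for `q ≤ N + M`, 0-indexed), one vertex `X i` per variable,
one vertex `C j` per clause, and the two new vertices `s` and `w` (the latter is the
verifier vertex, called `v` in the paper). -/
inductive SatVtx : Type where
  | b (t : ℕ) | gv (t : ℕ) | a (t : ℕ) | d (q : ℕ) | X (i : ℕ) | C (j : ℕ) | s | w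
deriving DecidableEq

/-- The spine position of the host vertices: the gadget block
`b₁ ≺ v₁ ≺ a₁ ≺ b₂ ≺ v₂ ≺ a₂ ≺ b₃ ≺ v₃ ≺ a₃` followed by
`d₁ ≺ X₁ ≺ d₂ ≺ X₂ ≺ … ≺ X_N ≺ d_{N+1} ≺ C₁ ≺ … ≺ C_M ≺ d_{N+M+1}` (0-indexed). -/
def satPos (N : ℕ) : SatVtx → ℕ
  | .b t => 3 * t
  | .gv t => 3 * t + 1
  | .a t => 3 * t + 2
  | .d q => 9 + 2 * q
  | .X i => 10 + 2 * i
  | .C j => 10 + 2 * (N + j)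
  | .s => 0
  | .w => 0

/-- The host vertices, i.e. `V(H)`. -/
def satHost (N M : ℕ) : SatVtx → Prop
  | .b t => t < 3
  | .gv t => t < 3
  | .a t => t < 3
  | .d q => q ≤ N + M
  | .X i => i < N
  | .C j => j < M
  | .s => False
  | .w => False

/-- The host page assignment (per-page-edge-set model).  The `2N + 1` pages are
`{0, …, 2N}`: page `2i` is `p_i` (variable `i` true), page `2i + 1` is `p_{¬i}`,
and page `2N` is the dummy page `p_d`.  A literal is a pair `(i, sign)` and
`lit j t` is the `t`-th literal of clause `j`. -/
def satHostPage (N M : ℕ) (lit : ℕ → ℕ → ℕ × Bool) (p : ℕ) (ep : Sym2 SatVtx) : Prop :=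
  (p < 2 * N ∧ ∃ t, t < 3 ∧ ep = s(SatVtx.b t, SatVtx.a t)) ∨
  (p = 2 * N ∧ ∃ t, t < 3 ∧
    (ep = s(SatVtx.b t, SatVtx.gv t) ∨ ep = s(SatVtx.gv t, SatVtx.a t))) ∨
  (p = 2 * N ∧ (ep = s(SatVtx.gv 0, SatVtx.gv 1) ∨ ep = s(SatVtx.gv 1, SatVtx.gv 2) ∨
    ep = s(SatVtx.b 0, SatVtx.a 2) ∨ ep = s(SatVtx.d 0, SatVtx.d (N + M)))) ∨
  (∃ i j, i < N ∧ j < N ∧ i ≠ j ∧ ep = s(SatVtx.d i, SatVtx.d (i + 1)) ∧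
    (p = 2 * j ∨ p = 2 * j + 1)) ∨
  (∃ j i, j < M ∧ i < N ∧ ep = s(SatVtx.d (N + j), SatVtx.d (N + j + 1)) ∧
    (((∃ t, t < 3 ∧ lit j t = (i, true)) ∧ p = 2 * i) ∨
     ((∃ t, t < 3 ∧ lit j t = (i, false)) ∧ p = 2 * i + 1) ∨
     ((∀ t, t < 3 → (lit j t).1 ≠ i) ∧ (p = 2 * i ∨ p = 2 * i + 1))))

/-- The new edges of `G`: `s v₁, s v₂, w v₂, w v₃`, `s X_i` for every variable `i`,
and `w C_j` for every clause `j`. -/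
def satNew (N M : ℕ) : Set (Sym2 SatVtx) :=
  {ep | ep = s(SatVtx.s, SatVtx.gv 0) ∨ ep = s(SatVtx.s, SatVtx.gv 1) ∨
        ep = s(SatVtx.w, SatVtx.gv 1) ∨ ep = s(SatVtx.w, SatVtx.gv 2) ∨
        (∃ i, i < N ∧ ep = s(SatVtx.s, SatVtx.X i)) ∨
        (∃ j, j < M ∧ ep = s(SatVtx.w, SatVtx.C j))}

/-!
The fixation gadget pins the new vertices. On a page `p_i` the edge `s v₁` (resp. `w v₃`) is
nested under `b₁ a₁` (resp. `b₃ a₃`); on `p_d` it is nested under `b₁ a₃` but cannot jump over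
the `p_d`-edges `v₂ v₃`, `v₃ a₃` (resp. `b₁ v₁`, `v₁ v₂`). Hence `s ≺ v₂ ≺ w ≺ a₃`, before every
`d_q`. So `w C_j` avoids `p_d` (it would cross `d₁ d_{N+M+1}`) and every page carrying the clause
segment `d_{N+j} d_{N+j+1}`: it lies on the page `p_ℓ` of a literal `ℓ` whose negation occurs in
`c_j`. Likewise `s X_i` lies on `p_i` or `p_{¬i}`, as every other page carries `d_i d_{i+1}`, and
not on the page of `w C_j`, as `s ≺ w ≺ X_i ≺ C_j`. Making `x_i` true iff `s X_i` is on `p_i` thus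
satisfies every clause. Conversely, from a satisfying assignment put `s` after `a₁` and `w` after
`a₂`, `s X_i` on the page of the true literal of `x_i`, and `w C_j` on the page of the negation of
a true literal of `c_j`; that page does not carry the segment of `c_j`, whose literals have
distinct variables.
-/

open Set

section Crossing

variable {V : Type*} {pos : V → ℕ}

theorem EdgesCross.lt_cases {x y u v : V} (h : EdgesCross pos s(x, y) s(u, v)) :
    (pos x < pos u ∧ pos u < pos y ∧ pos y < pos v) ∨
    (pos x < pos v ∧ pos v < pos y ∧ pos y < pos u) ∨
    (pos y < pos u ∧ pos u < pos x ∧ pos x < pos v) ∨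
    (pos y < pos v ∧ pos v < pos x ∧ pos x < pos u) := by
  obtain ⟨a, b, c, d, he, hf, h₁, h₂, h₃⟩ := h
  rw [Sym2.eq_iff] at he hf
  rcases he with ⟨rfl, rfl⟩ | ⟨rfl, rfl⟩ <;> rcases hf with ⟨rfl, rfl⟩ | ⟨rfl, rfl⟩ <;> tauto

theorem edgesCross_or_edgesCross_of_mem_Ioo_of_notMem_Icc {u v x y : V}
    (hx : pos x ∈ Ioo (pos u) (pos v)) (hy : pos y ∉ Icc (pos u) (pos v)) :
    EdgesCross pos s(u, v) s(x, y) ∨ EdgesCross pos s(y, x) s(u, v) := by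
  rw [mem_Ioo] at hx
  rw [mem_Icc, not_and_or, not_le, not_le] at hy
  rcases hy with hy | hy
  · exact .inr ⟨y, u, x, v, rfl, rfl, hy, hx.1, hx.2⟩
  · exact .inl ⟨u, x, v, y, rfl, rfl, hx.1, hx.2, hy⟩

end Crossing

def litPage : ℕ × Bool → ℕ
  | (i, true) => 2 * i
  | (i, false) => 2 * i + 1

theorem litPage_div_two (ℓ : ℕ × Bool) : litPage ℓ / 2 = ℓ.1 := by
  rcases ℓ with ⟨i, _ | _⟩ <;> simp only [litPage] <;> omega

theorem litPage_injective : Function.Injective litPage := by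
  rintro ⟨i, _ | _⟩ ⟨i', _ | _⟩ h <;>
    simp only [litPage, Prod.mk.injEq, Bool.false_eq_true, Bool.true_eq_false, and_true,
      and_false] at h ⊢ <;> omega

theorem litPage_lt {N i : ℕ} {b : Bool} (h : i < N) : litPage (i, b) < 2 * N := by
  have := litPage_div_two (i, b)
  omega

theorem exists_litPage_eq {N p : ℕ} (hp : p < 2 * N) :
    ∃ ℓ : ℕ × Bool, ℓ.1 < N ∧ litPage ℓ = p := by
  obtain ⟨i, rfl | rfl⟩ := Nat.even_or_odd' p
  exacts [⟨(i, true), by omega, rfl⟩, ⟨(i, false), by omega, rfl⟩]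

theorem litPage_eq_not_of_div_two {p i : ℕ} {b : Bool} (h : p / 2 = i)
    (hne : p ≠ litPage (i, b)) : p = litPage (i, !b) := by
  cases b <;> simp only [litPage, Bool.not_true, Bool.not_false] at hne ⊢ <;> omega

def ClauseSegmentOnPage (lit : ℕ → ℕ → ℕ × Bool) (j i p : ℕ) : Prop :=
  ((∃ t, t < 3 ∧ lit j t = (i, true)) ∧ p = 2 * i) ∨
  ((∃ t, t < 3 ∧ lit j t = (i, false)) ∧ p = 2 * i + 1) ∨
  ((∀ t, t < 3 → (lit j t).1 ≠ i) ∧ (p = 2 * i ∨ p = 2 * i + 1))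

section Clauses

variable {lit : ℕ → ℕ → ℕ × Bool} {j : ℕ} {ℓ : ℕ × Bool}

theorem clauseSegmentOnPage_litPage_iff {i : ℕ} :
    ClauseSegmentOnPage lit j i (litPage ℓ) ↔
      i = ℓ.1 ∧ ((∃ t, t < 3 ∧ lit j t = ℓ) ∨ ∀ t, t < 3 → (lit j t).1 ≠ ℓ.1) := by
  rcases ℓ with ⟨i', _ | _⟩ <;> simp only [ClauseSegmentOnPage, litPage] <;> grind

theorem exists_lit_eq_neg_of_not_clauseSegmentOnPage
    (h : ¬ ClauseSegmentOnPage lit j ℓ.1 (litPage ℓ)) :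
    ∃ t, t < 3 ∧ lit j t = (ℓ.1, !ℓ.2) := by
  rw [clauseSegmentOnPage_litPage_iff] at h
  push Not at h
  obtain ⟨hne, t, ht, hvar⟩ := h rfl
  exact ⟨t, ht, Prod.ext hvar (Bool.eq_not.2 fun hsign => hne t ht (Prod.ext hvar hsign))⟩

theorem not_clauseSegmentOnPage_neg
    (hdist : ∀ t < 3, ∀ t' < 3, (lit j t).1 = (lit j t').1 → t = t')
    (hℓ : ∃ t, t < 3 ∧ lit j t = ℓ) (i : ℕ) :
    ¬ ClauseSegmentOnPage lit j i (litPage (ℓ.1, !ℓ.2)) := by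
  obtain ⟨t, ht, rfl⟩ := hℓ
  rw [clauseSegmentOnPage_litPage_iff]
  rintro ⟨-, ⟨t', ht', h⟩ | habs⟩
  · have hvar : (lit j t').1 = (lit j t).1 := by rw [h]
    obtain rfl := hdist t' ht' t ht hvar
    simpa using congrArg Prod.snd h
  · exact habs t ht rfl

end Clauses

section HostPages

variable {N M : ℕ} {lit : ℕ → ℕ → ℕ × Bool} {p : ℕ}

theorem satHostPage_b_a {t : ℕ} (hp : p < 2 * N) (ht : t < 3) :
    satHostPage N M lit p s(.b t, .a t) :=
  .inl ⟨hp, t, ht, rfl⟩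

theorem satHostPage_varSeg {i : ℕ} (hi : i < N) (hp : p < 2 * N) (hpi : p / 2 ≠ i) :
    satHostPage N M lit p s(.d i, .d (i + 1)) :=
  .inr <| .inr <| .inr <| .inl ⟨i, p / 2, hi, by omega, hpi.symm, rfl, by omega⟩

theorem satHostPage_clauseSeg {j i : ℕ} (hj : j < M) (hi : i < N)
    (h : ClauseSegmentOnPage lit j i p) : satHostPage N M lit p s(.d (N + j), .d (N + j + 1)) :=
  .inr <| .inr <| .inr <| .inr ⟨j, i, hj, hi, rfl, h⟩

end HostPages

def satPage (N M : ℕ) (lit : ℕ → ℕ → ℕ × Bool) (σ : Sym2 SatVtx → ℕ) (p : ℕ)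
    (e : Sym2 SatVtx) : Prop :=
  satHostPage N M lit p e ∨ e ∈ satNew N M ∧ σ e = p

theorem satPage_of_mem_satNew {N M : ℕ} {lit : ℕ → ℕ → ℕ × Bool} {σ : Sym2 SatVtx → ℕ}
    {e : Sym2 SatVtx} (he : e ∈ satNew N M) : satPage N M lit σ (σ e) e :=
  .inr ⟨he, rfl⟩

structure IsSatExtension (N M : ℕ) (lit : ℕ → ℕ → ℕ × Bool) (pos : SatVtx → ℕ)
    (σ : Sym2 SatVtx → ℕ) : Prop where
  injOn : Set.InjOn pos {v | satHost N M v ∨ v = SatVtx.s ∨ v = SatVtx.w}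
  lt_iff : ∀ y z, satHost N M y → satHost N M z → (satPos N y < satPos N z ↔ pos y < pos z)
  page_le : ∀ e ∈ satNew N M, σ e ≤ 2 * N
  noCross : ∀ p e f, satPage N M lit σ p e → satPage N M lit σ p f → ¬ EdgesCross pos e f

namespace IsSatExtension

variable {N M : ℕ} {lit : ℕ → ℕ → ℕ × Bool} {pos : SatVtx → ℕ} {σ : Sym2 SatVtx → ℕ}
  {p : ℕ} {x y u v : SatVtx}

theorem pos_lt_pos (L : IsSatExtension N M lit pos σ) (h : satPos N y < satPos N v)
    (hy : satHost N M y := by simp only [satHost] <;> omega)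
    (hv : satHost N M v := by simp only [satHost] <;> omega) : pos y < pos v :=
  (L.lt_iff y v hy hv).1 h

theorem pos_ne_pos (L : IsSatExtension N M lit pos σ) (hx : x = .s ∨ x = .w)
    (hu : satHost N M u) : pos x ≠ pos u := fun h => by
  obtain rfl := L.injOn (.inr hx) (.inl hu) h
  rcases hx with rfl | rfl <;> exact hu

theorem mem_Icc_of_mem_Ioo (L : IsSatExtension N M lit pos σ)
    (hxy : satPage N M lit σ p s(x, y)) (huv : satPage N M lit σ p s(u, v))
    (hx : pos x ∈ Ioo (pos u) (pos v)) : pos y ∈ Icc (pos u) (pos v) := by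
  by_contra hy
  rcases edgesCross_or_edgesCross_of_mem_Ioo_of_notMem_Icc hx hy with h | h
  · exact L.noCross p _ _ huv hxy h
  · exact L.noCross p _ _ (Sym2.eq_swap ▸ hxy) huv h

theorem mem_Ioo_of_satPos_mem_Ioo (L : IsSatExtension N M lit pos σ) (hx : x = .s ∨ x = .w)
    (hxy : satPage N M lit σ p s(x, y)) (huv : satPage N M lit σ p s(u, v))
    (h : satPos N y ∈ Ioo (satPos N u) (satPos N v) := by
      simp only [satPos, mem_Ioo] <;> omega)
    (hy : satHost N M y := by simp only [satHost] <;> omega)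
    (hu : satHost N M u := by simp only [satHost] <;> omega)
    (hv : satHost N M v := by simp only [satHost] <;> omega) :
    pos x ∈ Ioo (pos u) (pos v) := by
  have hyI : pos y ∈ Ioo (pos u) (pos v) := ⟨L.pos_lt_pos h.1 hu hy, L.pos_lt_pos h.2 hy hv⟩
  have hxI := L.mem_Icc_of_mem_Ioo (Sym2.eq_swap ▸ hxy) huv hyI
  exact ⟨hxI.1.lt_of_ne (L.pos_ne_pos hx hu).symm, hxI.2.lt_of_ne (L.pos_ne_pos hx hv)⟩

theorem notMem_Icc_of_satPos_notMem_Icc (L : IsSatExtension N M lit pos σ)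
    (hx : x = .s ∨ x = .w)
    (hxy : satPage N M lit σ p s(x, y)) (huv : satPage N M lit σ p s(u, v))
    (h : satPos N y ∉ Icc (satPos N u) (satPos N v) := by
      simp only [satPos, mem_Icc] <;> omega)
    (hy : satHost N M y := by simp only [satHost] <;> omega)
    (hu : satHost N M u := by simp only [satHost] <;> omega)
    (hv : satHost N M v := by simp only [satHost] <;> omega) :
    pos x ∉ Icc (pos u) (pos v) := fun hxI => by
  have hyI := L.mem_Icc_of_mem_Ioo hxy huv
    ⟨hxI.1.lt_of_ne (L.pos_ne_pos hx hu).symm, hxI.2.lt_of_ne (L.pos_ne_pos hx hv)⟩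
  refine h ⟨?_, ?_⟩
  · exact not_lt.1 fun hlt => hyI.1.not_gt (L.pos_lt_pos hlt hy hu)
  · exact not_lt.1 fun hlt => hyI.2.not_gt (L.pos_lt_pos hlt hv hy)

theorem pos_s_lt_pos_gv_one (L : IsSatExtension N M lit pos σ) : pos .s < pos (.gv 1) := by
  have hmem : s(.s, .gv 0) ∈ satNew N M := by simp [satNew]
  have hs : satPage N M lit σ _ _ := satPage_of_mem_satNew hmem
  rcases (L.page_le _ hmem).lt_or_eq with hp | hp
  · have h₁ := L.mem_Ioo_of_satPos_mem_Ioo (.inl rfl) hs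
      (.inl (satHostPage_b_a hp (t := 0) (by omega)))
    have h₂ : pos (.a 0) < pos (.gv 1) := L.pos_lt_pos (by simp [satPos])
    exact h₁.2.trans h₂
  · rw [hp] at hs
    have h₁ := L.mem_Ioo_of_satPos_mem_Ioo (.inl rfl) hs (u := .b 0) (v := .a 2)
      (.inl (by simp [satHostPage]))
    have h₂ := L.notMem_Icc_of_satPos_notMem_Icc (.inl rfl) hs (u := .gv 1) (v := .gv 2)
      (.inl (by simp [satHostPage]))
    have h₃ := L.notMem_Icc_of_satPos_notMem_Icc (.inl rfl) hs (u := .gv 2) (v := .a 2)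
      (.inl (by simp [satHostPage]))
    simp only [mem_Ioo, mem_Icc] at h₁ h₂ h₃
    omega

theorem pos_w_mem_Ioo (L : IsSatExtension N M lit pos σ) :
    pos .w ∈ Ioo (pos (.gv 1)) (pos (.a 2)) := by
  have hmem : s(.w, .gv 2) ∈ satNew N M := by simp [satNew]
  have hw : satPage N M lit σ _ _ := satPage_of_mem_satNew hmem
  rcases (L.page_le _ hmem).lt_or_eq with hp | hp
  · have h₁ := L.mem_Ioo_of_satPos_mem_Ioo (.inr rfl) hw
      (.inl (satHostPage_b_a hp (t := 2) (by omega)))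
    have h₂ : pos (.gv 1) < pos (.b 2) := L.pos_lt_pos (by simp [satPos])
    exact ⟨h₂.trans h₁.1, h₁.2⟩
  · rw [hp] at hw
    have h₁ := L.mem_Ioo_of_satPos_mem_Ioo (.inr rfl) hw (u := .b 0) (v := .a 2)
      (.inl (by simp [satHostPage]))
    have h₂ := L.notMem_Icc_of_satPos_notMem_Icc (.inr rfl) hw (u := .b 0) (v := .gv 0)
      (.inl (by simp [satHostPage]))
    have h₃ := L.notMem_Icc_of_satPos_notMem_Icc (.inr rfl) hw (u := .gv 0) (v := .gv 1)
      (.inl (by simp [satHostPage]))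
    simp only [mem_Ioo, mem_Icc] at h₁ h₂ h₃ ⊢
    omega

theorem pos_w_lt_pos_d (L : IsSatExtension N M lit pos σ) {q : ℕ} (hq : q ≤ N + M) :
    pos .w < pos (.d q) :=
  L.pos_w_mem_Ioo.2.trans (L.pos_lt_pos (by simp only [satPos]; omega))

theorem pos_s_lt_pos_w (L : IsSatExtension N M lit pos σ) : pos .s < pos .w :=
  L.pos_s_lt_pos_gv_one.trans L.pos_w_mem_Ioo.1

theorem page_w_C_lt (L : IsSatExtension N M lit pos σ) {j : ℕ} (hj : j < M) :
    σ s(.w, .C j) < 2 * N := by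
  have hmem : s(.w, .C j) ∈ satNew N M := by simp [satNew, hj]
  refine (L.page_le _ hmem).lt_of_ne fun hp => ?_
  have hw : satPage N M lit σ (2 * N) s(.w, .C j) := hp ▸ satPage_of_mem_satNew hmem
  have h := L.mem_Ioo_of_satPos_mem_Ioo (.inr rfl) hw (u := .d 0) (v := .d (N + M))
    (.inl (by simp [satHostPage]))
  exact h.1.not_gt (L.pos_w_lt_pos_d (by omega))

theorem not_satHostPage_clauseSeg (L : IsSatExtension N M lit pos σ) {j : ℕ} (hj : j < M) :
    ¬ satHostPage N M lit (σ s(.w, .C j)) s(.d (N + j), .d (N + j + 1)) := fun hseg => by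
  have hmem : s(.w, .C j) ∈ satNew N M := by simp [satNew, hj]
  have h := L.mem_Ioo_of_satPos_mem_Ioo (.inr rfl) (satPage_of_mem_satNew hmem) (.inl hseg)
  exact h.1.not_gt (L.pos_w_lt_pos_d (by omega))

theorem page_s_X_div_two (L : IsSatExtension N M lit pos σ) {i : ℕ} (hi : i < N) :
    σ s(.s, .X i) / 2 = i := by
  have hmem : s(.s, .X i) ∈ satNew N M := by simp [satNew, hi]
  have hs : satPage N M lit σ _ _ := satPage_of_mem_satNew hmem
  have hsd : ∀ q ≤ N + M, pos .s < pos (.d q) := fun q hq =>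
    L.pos_s_lt_pos_w.trans (L.pos_w_lt_pos_d hq)
  have hlt : σ s(.s, .X i) < 2 * N := by
    refine (L.page_le _ hmem).lt_of_ne fun hp => ?_
    have hs' : satPage N M lit σ (2 * N) s(.s, .X i) := hp ▸ hs
    have h := L.mem_Ioo_of_satPos_mem_Ioo (.inl rfl) hs' (u := .d 0) (v := .d (N + M))
      (.inl (by simp [satHostPage]))
    exact h.1.not_gt (hsd 0 (by omega))
  by_contra hne
  have h := L.mem_Ioo_of_satPos_mem_Ioo (.inl rfl) hs (.inl (satHostPage_varSeg hi hlt hne))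
  exact h.1.not_gt (hsd i (by omega))

theorem page_s_X_ne_page_w_C (L : IsSatExtension N M lit pos σ) {i j : ℕ} (hi : i < N)
    (hj : j < M) : σ s(.s, .X i) ≠ σ s(.w, .C j) := fun hp => by
  have hsX : s(.s, .X i) ∈ satNew N M := by simp [satNew, hi]
  have hwC : s(.w, .C j) ∈ satNew N M := by simp [satNew, hj]
  have hwX : pos .w < pos (.X i) :=
    (L.pos_w_lt_pos_d (q := 0) (by omega)).trans (L.pos_lt_pos (by simp only [satPos]; omega))
  have hXC : pos (.X i) < pos (.C j) := L.pos_lt_pos (by simp only [satPos]; omega)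
  have hw : satPage N M lit σ (σ s(.s, .X i)) s(.w, .C j) := hp ▸ satPage_of_mem_satNew hwC
  have h := L.mem_Icc_of_mem_Ioo hw (satPage_of_mem_satNew hsX) ⟨L.pos_s_lt_pos_w, hwX⟩
  exact h.2.not_gt hXC

theorem exists_satisfying (L : IsSatExtension N M lit pos σ) :
    ∃ Γ : ℕ → Bool, ∀ j < M, ∃ t, t < 3 ∧ Γ (lit j t).1 = (lit j t).2 := by
  refine ⟨fun i => decide (σ s(.s, .X i) = litPage (i, true)), fun j hj => ?_⟩
  obtain ⟨ℓ, hℓN, hℓ⟩ := exists_litPage_eq (L.page_w_C_lt hj)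
  obtain ⟨t, ht, hlt⟩ : ∃ t, t < 3 ∧ lit j t = (ℓ.1, !ℓ.2) := by
    have hseg := L.not_satHostPage_clauseSeg hj
    rw [← hℓ] at hseg
    exact exists_lit_eq_neg_of_not_clauseSegmentOnPage
      (mt (satHostPage_clauseSeg hj hℓN) hseg)
  have hsX : σ s(.s, .X ℓ.1) = litPage (ℓ.1, !ℓ.2) :=
    litPage_eq_not_of_div_two (L.page_s_X_div_two hℓN)
      ((L.page_s_X_ne_page_w_C hℓN hj).trans_eq hℓ.symm)
  refine ⟨t, ht, ?_⟩
  rw [hlt]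
  simp [hsX, litPage_injective.eq_iff]

end IsSatExtension

-- Host vertices at twice their host position; `s` right after `a 0`, `w` right after `a 1`.
def extPos (N : ℕ) : SatVtx → ℕ
  | .b t => 6 * t
  | .gv t => 6 * t + 2
  | .a t => 6 * t + 4
  | .d q => 18 + 4 * q
  | .X i => 20 + 4 * i
  | .C j => 20 + 4 * (N + j)
  | .s => 5
  | .w => 11

/-- Every new edge joins `s` or `w` (label `0`) to a host vertex and goes on the page given by
that vertex's label: `s X_i` on the page of the true literal of `x_i`, `w C_j` on the page of the
negation of the true literal `ℓ j` of `c_j`. -/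
def extLabel (N : ℕ) (Γ : ℕ → Bool) (ℓ : ℕ → ℕ × Bool) : SatVtx → ℕ
  | .gv _ => 2 * N
  | .X i => litPage (i, Γ i)
  | .C j => litPage ((ℓ j).1, !(ℓ j).2)
  | _ => 0

def extPage (N : ℕ) (Γ : ℕ → Bool) (ℓ : ℕ → ℕ × Bool) (e : Sym2 SatVtx) : ℕ :=
  (e.map (extLabel N Γ ℓ)).sup

section Extension

variable {N M : ℕ} {lit : ℕ → ℕ → ℕ × Bool} {Γ : ℕ → Bool} {ℓ : ℕ → ℕ × Bool} {p : ℕ}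
  {e f : Sym2 SatVtx}

theorem extPage_mk (x y : SatVtx) :
    extPage N Γ ℓ s(x, y) = extLabel N Γ ℓ x ⊔ extLabel N Γ ℓ y :=
  rfl

theorem extPage_s_X (i : ℕ) : extPage N Γ ℓ s(.s, .X i) = litPage (i, Γ i) :=
  zero_max _

theorem extPage_w_C (j : ℕ) : extPage N Γ ℓ s(.w, .C j) = litPage ((ℓ j).1, !(ℓ j).2) :=
  zero_max _

theorem not_edgesCross_extPos_of_satHostPage (he : satHostPage N M lit p e)
    (hf : satHostPage N M lit p f) : ¬ EdgesCross (extPos N) e f := by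
  simp only [satHostPage] at he hf
  rcases he with ⟨hp, t, ht, rfl⟩ | ⟨hp, t, ht, rfl | rfl⟩ | ⟨hp, rfl | rfl | rfl | rfl⟩ |
      ⟨i, k, hi, hk, hik, rfl, hp⟩ | ⟨j, i, hj, hi, rfl, -⟩ <;>
    rcases hf with ⟨hp', t', ht', rfl⟩ | ⟨hp', t', ht', rfl | rfl⟩ |
      ⟨hp', rfl | rfl | rfl | rfl⟩ | ⟨i', k', hi', hk', hik', rfl, hp'⟩ |
      ⟨j', i', hj', hi', rfl, -⟩ <;>
    intro hc <;> have := hc.lt_cases <;> simp only [extPos] at this <;> omega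

theorem not_edgesCross_extPos_s_X {i : ℕ} (hi : i < N) (hp : p / 2 = i)
    (hf : satHostPage N M lit p f) :
    ¬ EdgesCross (extPos N) s(.s, .X i) f ∧ ¬ EdgesCross (extPos N) f s(.s, .X i) := by
  simp only [satHostPage] at hf
  rcases hf with ⟨hp', t, ht, rfl⟩ | ⟨hp', t, ht, rfl | rfl⟩ | ⟨hp', rfl | rfl | rfl | rfl⟩ |
      ⟨i', k, hi', hk, hik, rfl, hp'⟩ | ⟨j, i', hj, hi', rfl, -⟩ <;>
    constructor <;> intro hc <;> have := hc.lt_cases <;> simp only [extPos] at this <;> omega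

theorem not_edgesCross_extPos_w_C {j : ℕ} (hj : j < M) (hp : p < 2 * N)
    (hseg : ∀ i, ¬ ClauseSegmentOnPage lit j i p) (hf : satHostPage N M lit p f) :
    ¬ EdgesCross (extPos N) s(.w, .C j) f ∧ ¬ EdgesCross (extPos N) f s(.w, .C j) := by
  simp only [satHostPage] at hf
  rcases hf with ⟨hp', t, ht, rfl⟩ | ⟨hp', t, ht, rfl | rfl⟩ | ⟨hp', rfl | rfl | rfl | rfl⟩ |
      ⟨i', k, hi', hk, hik, rfl, hp'⟩ | ⟨j', i', hj', hi', rfl, hseg'⟩ <;>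
    constructor <;> intro hc <;> have := hc.lt_cases <;> simp only [extPos] at this <;>
    first
      | omega
      | obtain rfl : j' = j := by omega
        exact hseg i' hseg'

theorem not_edgesCross_extPos_of_mem_satNew (hℓ : ∀ j < M, (ℓ j).1 < N)
    (hseg : ∀ j < M, ∀ i, ¬ ClauseSegmentOnPage lit j i (litPage ((ℓ j).1, !(ℓ j).2)))
    (he : e ∈ satNew N M) (hf : satHostPage N M lit (extPage N Γ ℓ e) f) :
    ¬ EdgesCross (extPos N) e f ∧ ¬ EdgesCross (extPos N) f e := by
  rcases he with rfl | rfl | rfl | rfl | ⟨i, hi, rfl⟩ | ⟨j, hj, rfl⟩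
  rotate_left 4
  · exact not_edgesCross_extPos_s_X hi (by rw [extPage_s_X, litPage_div_two]) hf
  · rw [extPage_w_C] at hf
    exact not_edgesCross_extPos_w_C hj (litPage_lt (hℓ j hj)) (hseg j hj) hf
  all_goals
    simp only [extPage_mk, extLabel, satHostPage] at hf
    rcases hf with ⟨hp', t, ht, rfl⟩ | ⟨hp', t, ht, rfl | rfl⟩ | ⟨hp', rfl | rfl | rfl | rfl⟩ |
        ⟨i', k, hi', hk, hik, rfl, hp'⟩ | ⟨j, i', hj, hi', rfl, -⟩ <;>
      constructor <;> intro hc <;> have := hc.lt_cases <;> simp only [extPos] at this <;> omega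

theorem not_edgesCross_extPos_of_mem_satNew_of_mem_satNew
    (hsat : ∀ j < M, Γ (ℓ j).1 = (ℓ j).2) (he : e ∈ satNew N M) (hf : f ∈ satNew N M)
    (hp : extPage N Γ ℓ e = extPage N Γ ℓ f) :
    ¬ EdgesCross (extPos N) e f := by
  rcases he with rfl | rfl | rfl | rfl | ⟨i, hi, rfl⟩ | ⟨j, hj, rfl⟩ <;>
    rcases hf with rfl | rfl | rfl | rfl | ⟨i', hi', rfl⟩ | ⟨j', hj', rfl⟩ <;>
    intro hc <;> have := hc.lt_cases <;> simp only [extPos] at this <;> try omega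
  simp only [extPage_s_X, extPage_w_C, litPage_injective.eq_iff, Prod.ext_iff] at hp
  obtain ⟨rfl, hΓ⟩ := hp
  simp [hsat j' hj'] at hΓ

theorem extPos_injOn :
    Set.InjOn (extPos N) {v | satHost N M v ∨ v = SatVtx.s ∨ v = SatVtx.w} := by
  intro u hu v hv h
  simp only [Set.mem_ofPred_eq, satHost] at hu hv
  rcases u <;> rcases v <;> simp only [extPos] at h <;> simp_all <;> omega

theorem satPos_lt_iff_extPos_lt {y z : SatVtx} (hy : satHost N M y) (hz : satHost N M z) :
    satPos N y < satPos N z ↔ extPos N y < extPos N z := by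
  rcases y <;> rcases z <;> simp only [satHost] at hy hz <;> simp only [satPos, extPos] <;> omega

theorem isSatExtension_extPos (hlit : ∀ j < M, ∀ t < 3, (lit j t).1 < N)
    (hdist : ∀ j < M, ∀ t < 3, ∀ t' < 3, (lit j t).1 = (lit j t').1 → t = t')
    (hℓ : ∀ j < M, (∃ t, t < 3 ∧ lit j t = ℓ j) ∧ Γ (ℓ j).1 = (ℓ j).2) :
    IsSatExtension N M lit (extPos N) (extPage N Γ ℓ) := by
  have hℓN : ∀ j < M, (ℓ j).1 < N := fun j hj => by
    obtain ⟨t, ht, h⟩ := (hℓ j hj).1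
    exact h ▸ hlit j hj t ht
  have hseg j (hj : j < M) := not_clauseSegmentOnPage_neg (hdist j hj) (hℓ j hj).1
  refine ⟨extPos_injOn, fun y z => satPos_lt_iff_extPos_lt, fun e he => ?_, ?_⟩
  · rcases he with rfl | rfl | rfl | rfl | ⟨i, hi, rfl⟩ | ⟨j, hj, rfl⟩
    rotate_left 4
    · exact extPage_s_X i ▸ (litPage_lt hi).le
    · rw [extPage_w_C]
      exact (litPage_lt (hℓN j hj)).le
    all_goals exact sup_le (Nat.zero_le _) le_rfl
  · rintro p e f (he | ⟨he, rfl⟩) (hf | ⟨hf, hp⟩)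
    · exact not_edgesCross_extPos_of_satHostPage he hf
    · exact (not_edgesCross_extPos_of_mem_satNew hℓN hseg hf (hp ▸ he)).2
    · exact (not_edgesCross_extPos_of_mem_satNew hℓN hseg he hf).1
    · exact not_edgesCross_extPos_of_mem_satNew_of_mem_satNew (fun j hj => (hℓ j hj).2) he hf
        hp.symm

end Extension

/-- A 3-SAT formula `φ` with `N` variables and `M` clauses (each with
three pairwise distinct, pairwise non-complementary literals, i.e. three literals on
pairwise distinct variables) is satisfiable iff the constructed instance of
Stack Layout Extension with `ℓ = 2N + 1` pages admits an extension. -/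
theorem stmt4 (N M : ℕ) (lit : ℕ → ℕ → ℕ × Bool)
    (hlit : ∀ j < M, ∀ t < 3, (lit j t).1 < N)
    (hdist : ∀ j < M, ∀ t < 3, ∀ t' < 3, (lit j t).1 = (lit j t').1 → t = t') :
    (∃ Γ : ℕ → Bool, ∀ j < M, ∃ t, t < 3 ∧ Γ (lit j t).1 = (lit j t).2) ↔
      ∃ (posG : SatVtx → ℕ) (σ : Sym2 SatVtx → ℕ),
        Set.InjOn posG {v | satHost N M v ∨ v = SatVtx.s ∨ v = SatVtx.w} ∧
        (∀ y z, satHost N M y → satHost N M z →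
          (satPos N y < satPos N z ↔ posG y < posG z)) ∧
        (∀ e ∈ satNew N M, σ e ≤ 2 * N) ∧
        (∀ p e f, (satHostPage N M lit p e ∨ e ∈ satNew N M ∧ σ e = p) →
          (satHostPage N M lit p f ∨ f ∈ satNew N M ∧ σ f = p) →
          ¬ EdgesCross posG e f) := by
  constructor
  · rintro ⟨Γ, hΓ⟩
    choose! t ht hsat using hΓ
    have L : IsSatExtension N M lit (extPos N) (extPage N Γ fun j => lit j (t j)) :=
      isSatExtension_extPos hlit hdist fun j hj => ⟨⟨t j, ht j hj, rfl⟩, hsat j hj⟩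
    exact ⟨_, _, L.injOn, L.lt_iff, L.page_le, L.noCross⟩
  · rintro ⟨_, _, hinj, hlt, hle, hcross⟩
    exact IsSatExtension.exists_satisfying ⟨hinj, hlt, hle, hcross⟩
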